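/- arXiv:2004.09723 — 3 statements merged into one kernel-verified Lean document; each statement's English description precedes it below -/
import Mathlib

section
/- Let P and f be future-directed timelike vectors in V, J an antisymmetric angular momentum tensor, u a future-directed unit timelike vector and τ ∈ ℝ. Then there is exactly one point x on the SSC worldline with respect to f that satisfies η(u,x) = −τ, and its lowered components are x_μ = Σ_ρ J_{μρ}f^ρ/η(f,P) + τP_μ/(−η(u,P)) − (Σ_{λ,ρ} J_{λρ}u^λf^ρ/(−η(f,P)))·P_μ/(−η(u,P)). -/
/-!
On the SSC worldline the spin condition reads `x_μ η(f,P) = (J f)_μ + η(x,f) P_μ`, so (as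
`η(f,P) < 0` by the reverse Cauchy–Schwarz inequality) every point has `x_♭ = J f / η(f,P) + s P_♭`
for some `s ∈ ℝ`; conversely antisymmetry of `J` gives `η(J f, f) = 0`, so every such point lies
on the worldline. The worldline is therefore a straight line with direction `P`, and since
`η(u,P) ≠ 0` it meets the hyperplane `η(u,x) = -τ` for exactly one value of `s`.
-/

noncomputable section

open Finset

abbrev V4 := Fin 4 → ℝ

/-- Sign of the Minkowski metric diag(-1,1,1,1) on the diagonal. -/
def sgn4 (μ : Fin 4) : ℝ := if μ = 0 then -1 else 1

/-- Index lowering with η = diag(-1,1,1,1): `lo v μ = v_μ`. -/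
def lo (v : V4) : V4 := fun μ => sgn4 μ * v μ

/-- Minkowski bilinear form of signature (-,+,+,+). -/
def mink (v w : V4) : ℝ := ∑ μ, lo v μ * w μ

/-- Future-directed timelike vector. -/
def FDTimelike (v : V4) : Prop := mink v v < 0 ∧ 0 < v 0

/-- Future-directed unit timelike vector. -/
def FDUnit (u : V4) : Prop := mink u u = -1 ∧ 0 < u 0

/-- κ = √(−η(P,P)). -/
def kappa (P : V4) : ℝ := Real.sqrt (-(mink P P))

/-- Spin tensor at the point x: S[x]_{μν} = J_{μν} − x_μ P_ν + x_ν P_μ. -/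
def spinT (J : Fin 4 → Fin 4 → ℝ) (P x : V4) (μ ν : Fin 4) : ℝ :=
  J μ ν - lo x μ * lo P ν + lo x ν * lo P μ

/-- SSC worldline with respect to f: points where S[x]_{μν} f^ν = 0. -/
def SSCline (J : Fin 4 → Fin 4 → ℝ) (P f : V4) : Set V4 :=
  {x | ∀ μ, ∑ ν, spinT J P x μ ν * f ν = 0}

open Finset Matrix

lemma sgn4_mul_self (μ : Fin 4) : sgn4 μ * sgn4 μ = 1 := by
  unfold sgn4; split <;> norm_num

@[simp]
lemma lo_lo (v : V4) : lo (lo v) = v := by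
  funext μ
  simp only [lo, ← mul_assoc, sgn4_mul_self, one_mul]

lemma mink_eq_dotProduct (v w : V4) : mink v w = lo v ⬝ᵥ w := rfl

lemma mink_expand (v w : V4) :
    mink v w = -(v 0 * w 0) + v 1 * w 1 + v 2 * w 2 + v 3 * w 3 := by
  simp [mink, lo, sgn4, Fin.sum_univ_four]

lemma mink_comm (v w : V4) : mink v w = mink w v := by
  rw [mink_expand, mink_expand]; ring

lemma dotProduct_lo (v w : V4) : v ⬝ᵥ lo w = mink v w := by
  rw [mink_comm, mink_eq_dotProduct, dotProduct_comm]

lemma mink_neg_of_FDTimelike {v w : V4} (hv : FDTimelike v) (hw : FDTimelike w) :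
    mink v w < 0 := by
  have hvv := hv.1; have hww := hw.1
  rw [mink_expand] at hvv hww ⊢
  nlinarith [sq_nonneg (v 1 * w 2 - v 2 * w 1), sq_nonneg (v 1 * w 3 - v 3 * w 1),
    sq_nonneg (v 2 * w 3 - v 3 * w 2), mul_pos hv.2 hw.2,
    sq_nonneg (v 0 * w 0 - v 1 * w 1 - v 2 * w 2 - v 3 * w 3),
    sq_nonneg (v 0 * w 0 + v 1 * w 1 + v 2 * w 2 + v 3 * w 3), hv.2, hw.2]

lemma FDUnit.fdTimelike {u : V4} (hu : FDUnit u) : FDTimelike u :=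
  ⟨by rw [hu.1]; norm_num, hu.2⟩

lemma dotProduct_mulVec_self_of_antisymm {ι : Type*} [Fintype ι] {J : Matrix ι ι ℝ}
    (hJ : ∀ i j, J i j = -J j i) (v : ι → ℝ) : v ⬝ᵥ J *ᵥ v = 0 := by
  have hJt : Jᵀ = -J := by ext i j; simp [hJ j i]
  have h : v ⬝ᵥ J *ᵥ v = -(v ⬝ᵥ J *ᵥ v) :=
    calc v ⬝ᵥ J *ᵥ v = Jᵀ *ᵥ v ⬝ᵥ v := by rw [dotProduct_mulVec, mulVec_transpose]
      _ = -(v ⬝ᵥ J *ᵥ v) := by rw [hJt, neg_mulVec, neg_dotProduct, dotProduct_comm]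
  linarith

lemma sum_spinT_mul (J : Fin 4 → Fin 4 → ℝ) (P x f : V4) (μ : Fin 4) :
    ∑ ν, spinT J P x μ ν * f ν = (J *ᵥ f) μ - lo x μ * mink f P + lo P μ * mink x f := by
  have hx : ∑ ν, lo x ν * lo P μ * f ν = lo P μ * mink x f := by
    rw [mink, mul_sum]
    exact sum_congr rfl fun _ _ => by ring
  simp only [spinT, sub_mul, add_mul, sum_add_distrib, sum_sub_distrib]
  rw [hx, mink_comm f P]
  simp only [mul_assoc, ← mul_sum]
  rfl

lemma mem_SSCline_iff {J : Fin 4 → Fin 4 → ℝ} {P f x : V4} (hJ : ∀ μ ν, J μ ν = -J ν μ)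
    (hc : mink f P ≠ 0) :
    x ∈ SSCline J P f ↔ ∃ s : ℝ, lo x = (mink f P)⁻¹ • J *ᵥ f + s • lo P := by
  simp only [SSCline, Set.mem_ofPred_eq, sum_spinT_mul]
  constructor
  · intro hx
    refine ⟨mink x f / mink f P, funext fun μ => ?_⟩
    have hxμ := hx μ
    simp only [Pi.add_apply, Pi.smul_apply, smul_eq_mul]
    field_simp
    linear_combination -hxμ
  · rintro ⟨s, hs⟩ μ
    have hxf : mink x f = s * mink f P := by
      rw [mink_eq_dotProduct, hs, add_dotProduct, smul_dotProduct, smul_dotProduct,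
        dotProduct_comm, dotProduct_mulVec_self_of_antisymm hJ, ← mink_eq_dotProduct,
        mink_comm P f]
      simp
    rw [hxf, hs]
    simp only [Pi.add_apply, Pi.smul_apply, smul_eq_mul]
    field_simp
    ring

lemma mem_SSCline_and_mink_eq_iff {J : Fin 4 → Fin 4 → ℝ} {P f u x : V4} {τ : ℝ}
    (hJ : ∀ μ ν, J μ ν = -J ν μ) (hc : mink f P ≠ 0) (hb : mink u P ≠ 0) :
    x ∈ SSCline J P f ∧ mink u x = -τ ↔
      lo x = (mink f P)⁻¹ • J *ᵥ f
        + ((-τ - (u ⬝ᵥ J *ᵥ f) / mink f P) / mink u P) • lo P := by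
  have mink_u {s : ℝ} (hs : lo x = (mink f P)⁻¹ • J *ᵥ f + s • lo P) :
      mink u x = (u ⬝ᵥ J *ᵥ f) / mink f P + s * mink u P := by
    rw [← dotProduct_lo, hs, dotProduct_add, dotProduct_smul, dotProduct_smul, dotProduct_lo,
      smul_eq_mul, smul_eq_mul, inv_mul_eq_div]
  rw [mem_SSCline_iff hJ hc]
  constructor
  · rintro ⟨⟨s, hs⟩, hτ⟩
    rw [mink_u hs] at hτ
    have hs' : s = (-τ - (u ⬝ᵥ J *ᵥ f) / mink f P) / mink u P :=
      eq_div_of_mul_eq hb (by linarith)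
    rw [hs, hs']
  · intro hx
    refine ⟨⟨_, hx⟩, ?_⟩
    rw [mink_u hx]
    field_simp
    ring

theorem statement1 (P f u : V4) (τ : ℝ) (J : Fin 4 → Fin 4 → ℝ)
    (hP : FDTimelike P) (hf : FDTimelike f) (hu : FDUnit u)
    (hJ : ∀ μ ν, J μ ν = - J ν μ) :
    (∃! x : V4, x ∈ SSCline J P f ∧ mink u x = -τ) ∧
    (∀ x ∈ SSCline J P f, mink u x = -τ →
      ∀ μ, lo x μ = (∑ ρ, J μ ρ * f ρ) / mink f P
        + τ * lo P μ / (-(mink u P))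
        - ((∑ l, ∑ ρ, J l ρ * u l * f ρ) / (-(mink f P))) * (lo P μ / (-(mink u P)))) := by
  have hc : mink f P ≠ 0 := (mink_neg_of_FDTimelike hf hP).ne
  have hb : mink u P ≠ 0 := (mink_neg_of_FDTimelike hu.fdTimelike hP).ne
  have hD : ∑ l, ∑ ρ, J l ρ * u l * f ρ = u ⬝ᵥ J *ᵥ f := by
    simp only [dotProduct, mulVec, mul_sum]
    exact sum_congr rfl fun _ _ => sum_congr rfl fun _ _ => by ring
  refine ⟨?_, fun x hx hτ μ => ?_⟩
  · refine ⟨lo ((mink f P)⁻¹ • J *ᵥ f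
        + ((-τ - (u ⬝ᵥ J *ᵥ f) / mink f P) / mink u P) • lo P),
      (mem_SSCline_and_mink_eq_iff hJ hc hb).2 (lo_lo _), fun y hy => ?_⟩
    rw [← (mem_SSCline_and_mink_eq_iff hJ hc hb).1 hy, lo_lo]
  · have hlo := congrFun ((mem_SSCline_and_mink_eq_iff hJ hc hb).1 ⟨hx, hτ⟩) μ
    rw [hlo, hD]
    simp only [Pi.add_apply, Pi.smul_apply, smul_eq_mul, mulVec, dotProduct]
    field_simp
    ring
end
end

section
/- (Møller disc, containment form.) Let P be future-directed timelike with κ := √(−η(P,P)), J antisymmetric, and W the Pauli–Lubański vector with components W_μ := −(1/2)Σ_{ν,ρ,σ} ε_{μνρσ}P^νJ^{ρσ}. Let f be any future-directed timelike vector, and let x(f) be the point with lowered components Σ_ρ J_{μρ}f^ρ/η(f,P) (a point on the SSC worldline with respect to f) and y the point with lowered components Σ_ρ J_{μρ}P^ρ/η(P,P) (a point on the centre-of-inertia worldline). Let Δ := (x(f) − y) + η(x(f) − y, P)·P/κ² be the component of x(f) − y that is η-orthogonal to P. Then η(Δ,P) = 0, η(Δ,W) = 0, and η(Δ,Δ)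 ≤ η(W,W)/κ⁴, i.e. all SSC positions lie, orthogonally to P, in the plane orthogonal to W within the closed disc of Møller radius √(η(W,W))/κ² about the centre of inertia. -/
set_option maxHeartbeats 4000000
set_option linter.unusedVariables false
set_option linter.deprecated false

noncomputable section

open Finset

/-- Sign of an integer, valued in ℝ. -/
def isgn (x : ℤ) : ℝ := if 0 < x then 1 else if x < 0 then -1 else 0

/-- Totally antisymmetric symbol on four indices with ε₀₁₂₃ = +1. -/
def eps4 (μ ν ρ σ : Fin 4) : ℝ :=
  isgn (((ν : ℕ) : ℤ) - ((μ : ℕ) : ℤ)) * isgn (((ρ : ℕ) : ℤ) - ((μ : ℕ) : ℤ)) *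
  isgn (((σ : ℕ) : ℤ) - ((μ : ℕ) : ℤ)) * isgn (((ρ : ℕ) : ℤ) - ((ν : ℕ) : ℤ)) *
  isgn (((σ : ℕ) : ℤ) - ((ν : ℕ) : ℤ)) * isgn (((σ : ℕ) : ℤ) - ((ρ : ℕ) : ℤ))

/-- Raising both indices of a (0,2)-tensor with the inverse metric: S^{ρσ}. -/
def raise2 (S : Fin 4 → Fin 4 → ℝ) (ρ σ : Fin 4) : ℝ := sgn4 ρ * sgn4 σ * S ρ σ

/-- The standard boost B(u) mapping P/κ to u:
B^μ_ν = δ^μ_ν + (P^μ/κ + u^μ)(P_ν/κ + u_ν)/(1 − η(u,P)/κ) − (2/κ) u^μ P_ν. -/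
def boost (P u : V4) (μ ν : Fin 4) : ℝ :=
  (if μ = ν then 1 else 0)
  + (P μ / kappa P + u μ) * (lo P ν / kappa P + lo u ν) / (1 - mink u P / kappa P)
  - (2 / kappa P) * u μ * lo P ν

/-- Lowered components of the Pauli–Lubański covector built from P and an
antisymmetric tensor S: W_μ = −(1/2) ε_{μνρσ} P^ν S^{ρσ}. -/
def PL (P : V4) (S : Fin 4 → Fin 4 → ℝ) (μ : Fin 4) : ℝ :=
  -(1/2) * ∑ ν, ∑ ρ, ∑ σ, eps4 μ ν ρ σ * P ν * raise2 S ρ σ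

/-- Lowered components of the spin vector in the frame u:
s_μ = η_{μλ} (1/κ) B(u)^λ_ν W^ν. -/
def spinVec (P u : V4) (S : Fin 4 → Fin 4 → ℝ) (μ : Fin 4) : ℝ :=
  sgn4 μ * ((1 / kappa P) * ∑ ν, boost P u μ ν * (sgn4 ν * PL P S ν))

/-- Centre-of-spin condition for the antisymmetric tensor S relative to u:
s_μ = −(1/2) ε_{μνρσ} u^ν S^{ρσ}. -/
def CentreOfSpin (P u : V4) (S : Fin 4 → Fin 4 → ℝ) : Prop :=
  ∀ μ, spinVec P u S μ = -(1/2) * ∑ ν, ∑ ρ, ∑ σ, eps4 μ ν ρ σ * u ν * raise2 S ρ σ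


lemma s6_fv0 : ((0 : Fin 4) : ℕ) = 0 := rfl
lemma s6_fv1 : ((1 : Fin 4) : ℕ) = 1 := rfl
lemma s6_fv2 : ((2 : Fin 4) : ℕ) = 2 := rfl
lemma s6_fv3 : ((3 : Fin 4) : ℕ) = 3 := rfl
lemma s6_fe1 : (1 : Fin 4) ≠ 0 := by decide
lemma s6_fe2 : (2 : Fin 4) ≠ 0 := by decide
lemma s6_fe3 : (3 : Fin 4) ≠ 0 := by decide
lemma s6_sg0 : sgn4 0 = -1 := by norm_num [sgn4]
lemma s6_sg1 : sgn4 1 = 1 := by norm_num [sgn4, s6_fe1]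
lemma s6_sg2 : sgn4 2 = 1 := by norm_num [sgn4, s6_fe2]
lemma s6_sg3 : sgn4 3 = 1 := by norm_num [sgn4, s6_fe3]

lemma s6_up (v : V4) (μ : Fin 4) : v μ = sgn4 μ * lo v μ := by
  by_cases h : μ = 0 <;> simp [lo, sgn4, h]

lemma s6_cs3 (a b c d e g : ℝ) :
    (a*d + b*e + c*g)^2 ≤ (a^2 + b^2 + c^2) * (d^2 + e^2 + g^2) := by
  nlinarith [sq_nonneg (a*e - b*d), sq_nonneg (a*g - c*d), sq_nonneg (b*g - c*e)]

lemma s6_fp (f0 f1 f2 f3 p0 p1 p2 p3 : ℝ)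
    (hf : f1^2 + f2^2 + f3^2 < f0^2) (hf0 : 0 < f0)
    (hp : p1^2 + p2^2 + p3^2 < p0^2) (hp0 : 0 < p0) :
    -(f0*p0) + (f1*p1 + f2*p2 + f3*p3) < 0 := by
  nlinarith [s6_cs3 f1 f2 f3 p1 p2 p3, mul_pos hf0 hp0,
    sq_nonneg (f0*p0 + (f1*p1 + f2*p2 + f3*p3)), sq_nonneg f0, sq_nonneg p0,
    sq_nonneg (f1*p1 + f2*p2 + f3*p3)]

lemma s6_key (w0 w1 w2 w3 p0 p1 p2 p3 : ℝ)
    (h : w0*p0 = w1*p1 + w2*p2 + w3*p3)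
    (hp : p1^2 + p2^2 + p3^2 < p0^2) :
    0 ≤ -(w0*w0) + w1*w1 + w2*w2 + w3*w3 := by
  have h1 : 0 ≤ (w1^2 + w2^2 + w3^2) * (p0^2 - (p1^2 + p2^2 + p3^2)) := by
    have : (0:ℝ) ≤ w1^2 + w2^2 + w3^2 := by positivity
    nlinarith
  have hsq : (w0*p0)^2 = (w1*p1 + w2*p2 + w3*p3)^2 := by rw [h]
  have hp0 : (0:ℝ) < p0^2 := lt_of_le_of_lt (by positivity) hp
  nlinarith [s6_cs3 w1 w2 w3 p1 p2 p3, hsq, h1, hp0]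


lemma s6_comb (A B xf0 y0 c P0 X0 Y0 S T : ℝ) (hA : A ≠ 0) (hB : B ≠ 0)
    (e1 : xf0 = X0 / A) (e2 : y0 = Y0 / B) (e3 : c = S / A - T / B) (eT : T = 0) :
    (xf0 - y0 + c / -B * P0) * (A * B) = B * X0 - A * Y0 - S * P0 := by
  subst e1 e2 e3 eT
  field_simp
  ring

theorem statement6 (P f : V4) (J : Fin 4 → Fin 4 → ℝ)
    (hP : FDTimelike P) (hf : FDTimelike f) (hJ : ∀ μ ν, J μ ν = - J ν μ)
    (W xf y Δ : V4)
    (hW : ∀ μ, lo W μ = -(1/2) * ∑ ν, ∑ ρ, ∑ σ, eps4 μ ν ρ σ * P ν * raise2 J ρ σ)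
    (hxf : ∀ μ, lo xf μ = (∑ ρ, J μ ρ * f ρ) / mink f P)
    (hy : ∀ μ, lo y μ = (∑ ρ, J μ ρ * P ρ) / mink P P)
    (hΔ : Δ = (xf - y) + (mink (xf - y) P / (kappa P) ^ 2) • P) :
    mink Δ P = 0 ∧ mink Δ W = 0 ∧ mink Δ Δ ≤ mink W W / (kappa P) ^ 4 := by
  obtain ⟨hPP, hP0⟩ := hP
  obtain ⟨hff, hf0⟩ := hf
  -- expanded component facts
  have hPPc : -(P 0 * P 0) + P 1 * P 1 + P 2 * P 2 + P 3 * P 3 < 0 := by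
    have := hPP
    simp only [mink, lo, Fin.sum_univ_four, s6_sg0, s6_sg1, s6_sg2, s6_sg3] at this
    linarith
  have hffc : -(f 0 * f 0) + f 1 * f 1 + f 2 * f 2 + f 3 * f 3 < 0 := by
    have := hff
    simp only [mink, lo, Fin.sum_univ_four, s6_sg0, s6_sg1, s6_sg2, s6_sg3] at this
    linarith
  have hPPsq : P 1^2 + P 2^2 + P 3^2 < P 0^2 := by linarith only [hPPc]
  have hffsq : f 1^2 + f 2^2 + f 3^2 < f 0^2 := by linarith only [hffc]
  have hA : mink f P < 0 := by
    have h := s6_fp (f 0) (f 1) (f 2) (f 3) (P 0) (P 1) (P 2) (P 3)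
      hffsq hf0 hPPsq hP0
    simp only [mink, lo, Fin.sum_univ_four, s6_sg0, s6_sg1, s6_sg2, s6_sg3]
    linarith only [h]
  have hAne : mink f P ≠ 0 := ne_of_lt hA
  have hBne : mink P P ≠ 0 := ne_of_lt hPP
  have hk2 : kappa P ^ 2 = -(mink P P) := by
    rw [kappa]; exact Real.sq_sqrt (by linarith)
  have hk4 : kappa P ^ 4 = (mink P P) ^ 2 := by
    have : kappa P ^ 4 = (kappa P ^ 2) ^ 2 := by ring
    rw [this, hk2]; ring
  -- antisymmetry facts
  have j00 : J 0 0 = 0 := by have := hJ 0 0; linarith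
  have j11 : J 1 1 = 0 := by have := hJ 1 1; linarith
  have j22 : J 2 2 = 0 := by have := hJ 2 2; linarith
  have j33 : J 3 3 = 0 := by have := hJ 3 3; linarith
  have j10 : J 1 0 = -J 0 1 := hJ 1 0
  have j20 : J 2 0 = -J 0 2 := hJ 2 0
  have j30 : J 3 0 = -J 0 3 := hJ 3 0
  have j21 : J 2 1 = -J 1 2 := hJ 2 1
  have j31 : J 3 1 = -J 1 3 := hJ 3 1
  have j32 : J 3 2 = -J 2 3 := hJ 3 2
  -- explicit components of W (upper indices)
  have hwu0 : W 0 = P 1 * J 2 3 - P 2 * J 1 3 + P 3 * J 1 2 := by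
    rw [s6_up W 0, hW 0]
    simp only [Fin.sum_univ_four, raise2, eps4, isgn, sgn4, s6_fv0, s6_fv1, s6_fv2, s6_fv3,
      s6_fe1, s6_fe2, s6_fe3]
    norm_num
    simp only [j10, j20, j30, j21, j31, j32]
    ring
  have hwu1 : W 1 = P 0 * J 2 3 + P 2 * J 0 3 - P 3 * J 0 2 := by
    rw [s6_up W 1, hW 1]
    simp only [Fin.sum_univ_four, raise2, eps4, isgn, sgn4, s6_fv0, s6_fv1, s6_fv2, s6_fv3,
      s6_fe1, s6_fe2, s6_fe3]
    norm_num
    simp only [j10, j20, j30, j21, j31, j32]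
    ring
  have hwu2 : W 2 = -(P 0 * J 1 3) - P 1 * J 0 3 + P 3 * J 0 1 := by
    rw [s6_up W 2, hW 2]
    simp only [Fin.sum_univ_four, raise2, eps4, isgn, sgn4, s6_fv0, s6_fv1, s6_fv2, s6_fv3,
      s6_fe1, s6_fe2, s6_fe3]
    norm_num
    simp only [j10, j20, j30, j21, j31, j32]
    ring
  have hwu3 : W 3 = P 0 * J 1 2 + P 1 * J 0 2 - P 2 * J 0 1 := by
    rw [s6_up W 3, hW 3]
    simp only [Fin.sum_univ_four, raise2, eps4, isgn, sgn4, s6_fv0, s6_fv1, s6_fv2, s6_fv3,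
      s6_fe1, s6_fe2, s6_fe3]
    norm_num
    simp only [j10, j20, j30, j21, j31, j32]
    ring
  -- upper components of xf and y
  have hxfu : ∀ μ, xf μ = (sgn4 μ * (∑ ρ, J μ ρ * f ρ)) / mink f P := fun μ => by
    rw [s6_up xf μ, hxf]; ring
  have hyu : ∀ μ, y μ = (sgn4 μ * (∑ ρ, J μ ρ * P ρ)) / mink P P := fun μ => by
    rw [s6_up y μ, hy]; ring
  have hloxy : ∀ μ, lo (xf - y) μ = lo xf μ - lo y μ := by
    intro μ; simp [lo, mul_sub]
  have hm : mink (xf - y) P =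
      ∑ μ, ((∑ ρ, J μ ρ * f ρ) / mink f P - (∑ ρ, J μ ρ * P ρ) / mink P P) * P μ := by
    conv_lhs => rw [mink]
    exact Finset.sum_congr rfl fun μ _ => by rw [hloxy, hxf, hy]
  have hS : mink (xf - y) P =
      (∑ μ, (∑ ρ, J μ ρ * f ρ) * P μ) / mink f P
        - (∑ μ, (∑ ρ, J μ ρ * P ρ) * P μ) / mink P P := by
    rw [hm]
    simp only [Fin.sum_univ_four]
    field_simp
    ring
  have hT0 : (∑ μ, (∑ ρ, J μ ρ * P ρ) * P μ) = 0 := by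
    simp only [Fin.sum_univ_four, j00, j11, j22, j33, j10, j20, j30, j21, j31, j32]
    ring
  have hABne : mink f P * mink P P ≠ 0 := mul_ne_zero hAne hBne
  have hdM0 : Δ 0 * (mink f P * mink P P) = sgn4 0 * (-1 * f 1 * P 2 * W 3 + 1 * f 1 * P 3 * W 2 + 1 * f 2 * P 1 * W 3 + -1 * f 2 * P 3 * W 1 + -1 * f 3 * P 1 * W 2 + 1 * f 3 * P 2 * W 1) := by
    rw [hΔ]
    simp only [Pi.add_apply, Pi.sub_apply, Pi.smul_apply, smul_eq_mul, hk2]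
    rw [s6_comb (mink f P) (mink P P) (xf 0) (y 0) (mink (xf - y) P) (P 0) _ _ _ _
      hAne hBne (hxfu 0) (hyu 0) hS hT0]
    simp only [hwu0, hwu1, hwu2, hwu3, mink, lo, Fin.sum_univ_four, s6_sg0, s6_sg1, s6_sg2,
      s6_sg3, j00, j11, j22, j33, j10, j20, j30, j21, j31, j32]
    ring
  have hdM1 : Δ 1 * (mink f P * mink P P) = sgn4 1 * (1 * f 0 * P 2 * W 3 + -1 * f 0 * P 3 * W 2 + -1 * f 2 * P 0 * W 3 + 1 * f 2 * P 3 * W 0 + 1 * f 3 * P 0 * W 2 + -1 * f 3 * P 2 * W 0) := by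
    rw [hΔ]
    simp only [Pi.add_apply, Pi.sub_apply, Pi.smul_apply, smul_eq_mul, hk2]
    rw [s6_comb (mink f P) (mink P P) (xf 1) (y 1) (mink (xf - y) P) (P 1) _ _ _ _
      hAne hBne (hxfu 1) (hyu 1) hS hT0]
    simp only [hwu0, hwu1, hwu2, hwu3, mink, lo, Fin.sum_univ_four, s6_sg0, s6_sg1, s6_sg2,
      s6_sg3, j00, j11, j22, j33, j10, j20, j30, j21, j31, j32]
    ring
  have hdM2 : Δ 2 * (mink f P * mink P P) = sgn4 2 * (-1 * f 0 * P 1 * W 3 + 1 * f 0 * P 3 * W 1 + 1 * f 1 * P 0 * W 3 + -1 * f 1 * P 3 * W 0 + -1 * f 3 * P 0 * W 1 + 1 * f 3 * P 1 * W 0) := by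
    rw [hΔ]
    simp only [Pi.add_apply, Pi.sub_apply, Pi.smul_apply, smul_eq_mul, hk2]
    rw [s6_comb (mink f P) (mink P P) (xf 2) (y 2) (mink (xf - y) P) (P 2) _ _ _ _
      hAne hBne (hxfu 2) (hyu 2) hS hT0]
    simp only [hwu0, hwu1, hwu2, hwu3, mink, lo, Fin.sum_univ_four, s6_sg0, s6_sg1, s6_sg2,
      s6_sg3, j00, j11, j22, j33, j10, j20, j30, j21, j31, j32]
    ring
  have hdM3 : Δ 3 * (mink f P * mink P P) = sgn4 3 * (1 * f 0 * P 1 * W 2 + -1 * f 0 * P 2 * W 1 + -1 * f 1 * P 0 * W 2 + 1 * f 1 * P 2 * W 0 + 1 * f 2 * P 0 * W 1 + -1 * f 2 * P 1 * W 0) := by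
    rw [hΔ]
    simp only [Pi.add_apply, Pi.sub_apply, Pi.smul_apply, smul_eq_mul, hk2]
    rw [s6_comb (mink f P) (mink P P) (xf 3) (y 3) (mink (xf - y) P) (P 3) _ _ _ _
      hAne hBne (hxfu 3) (hyu 3) hS hT0]
    simp only [hwu0, hwu1, hwu2, hwu3, mink, lo, Fin.sum_univ_four, s6_sg0, s6_sg1, s6_sg2,
      s6_sg3, j00, j11, j22, j33, j10, j20, j30, j21, j31, j32]
    ring
  clear hm hloxy hxfu hyu hW hxf hy hΔ hJ hS hT0
  refine ⟨?_, ?_, ?_⟩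
  · -- mink Δ P = 0
    have e : mink Δ P * (mink f P * mink P P) =
        sgn4 0 * ((Δ 0 * (mink f P * mink P P)) * P 0)
        + sgn4 1 * ((Δ 1 * (mink f P * mink P P)) * P 1)
        + sgn4 2 * ((Δ 2 * (mink f P * mink P P)) * P 2)
        + sgn4 3 * ((Δ 3 * (mink f P * mink P P)) * P 3) := by
      simp only [mink, lo, Fin.sum_univ_four]; ring
    have h0 : mink Δ P * (mink f P * mink P P) = 0 := by
      rw [e, hdM0, hdM1, hdM2, hdM3]
      simp only [s6_sg0, s6_sg1, s6_sg2, s6_sg3]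
      ring
    exact (mul_eq_zero.mp h0).resolve_right hABne
  · -- mink Δ W = 0
    have e : mink Δ W * (mink f P * mink P P) =
        sgn4 0 * ((Δ 0 * (mink f P * mink P P)) * W 0)
        + sgn4 1 * ((Δ 1 * (mink f P * mink P P)) * W 1)
        + sgn4 2 * ((Δ 2 * (mink f P * mink P P)) * W 2)
        + sgn4 3 * ((Δ 3 * (mink f P * mink P P)) * W 3) := by
      simp only [mink, lo, Fin.sum_univ_four]; ring
    have h0 : mink Δ W * (mink f P * mink P P) = 0 := by
      rw [e, hdM0, hdM1, hdM2, hdM3]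
      simp only [s6_sg0, s6_sg1, s6_sg2, s6_sg3]
      ring
    exact (mul_eq_zero.mp h0).resolve_right hABne
  · -- the inequality
    have hWPc : W 0 * P 0 = W 1 * P 1 + W 2 * P 2 + W 3 * P 3 := by
      rw [hwu0, hwu1, hwu2, hwu3]; ring
    have hW2 : 0 ≤ mink W W := by
      have h := s6_key (W 0) (W 1) (W 2) (W 3) (P 0) (P 1) (P 2) (P 3)
        hWPc hPPsq
      simp only [mink, lo, Fin.sum_univ_four, s6_sg0, s6_sg1, s6_sg2, s6_sg3]
      linarith only [h]
    have hPW0 : mink P W = 0 := by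
      simp only [mink, lo, Fin.sum_univ_four, s6_sg0, s6_sg1, s6_sg2, s6_sg3]
      rw [hwu0, hwu1, hwu2, hwu3]; ring
    have hDDf : mink Δ Δ * (mink f P * mink P P) ^ 2 =
        (mink f P) ^ 2 * mink W W
          - mink P P * (mink W W * mink f f - (mink f W) ^ 2)
          + mink f f * (mink P W) ^ 2
          - 2 * mink f P * mink P W * mink f W := by
      have e : mink Δ Δ * (mink f P * mink P P) ^ 2 =
          sgn4 0 * ((Δ 0 * (mink f P * mink P P)) * (Δ 0 * (mink f P * mink P P)))
          + sgn4 1 * ((Δ 1 * (mink f P * mink P P)) * (Δ 1 * (mink f P * mink P P)))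
          + sgn4 2 * ((Δ 2 * (mink f P * mink P P)) * (Δ 2 * (mink f P * mink P P)))
          + sgn4 3 * ((Δ 3 * (mink f P * mink P P)) * (Δ 3 * (mink f P * mink P P))) := by
        simp only [mink, lo, Fin.sum_univ_four]; ring
      rw [e, hdM0, hdM1, hdM2, hdM3]
      simp only [mink, lo, Fin.sum_univ_four, s6_sg0, s6_sg1, s6_sg2, s6_sg3]
      ring
    have hDD : mink Δ Δ * (mink f P * mink P P) ^ 2 =
        (mink f P) ^ 2 * mink W W
          - mink P P * (mink W W * mink f f - (mink f W) ^ 2) := by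
      rw [hDDf, hPW0]; ring
    clear hDDf hPW0 hdM0 hdM1 hdM2 hdM3 hwu0 hwu1 hwu2 hwu3 hWPc
    have hB2 : (0:ℝ) < (mink P P) ^ 2 := by positivity
    have hA2 : (0:ℝ) < (mink f P) ^ 2 := by positivity
    rw [hk4, le_div_iff₀ hB2]
    have h1 : mink W W * mink f f ≤ 0 :=
      mul_nonpos_iff.mpr (Or.inl ⟨hW2, le_of_lt hff⟩)
    have ht1 : 0 ≤ mink P P * (mink W W * mink f f) := by
      have h2 := mul_nonneg (neg_nonneg.mpr (le_of_lt hPP)) (neg_nonneg.mpr h1)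
      linarith only [h2]
    have ht2 : mink P P * (mink f W) ^ 2 ≤ 0 :=
      mul_nonpos_iff.mpr (Or.inr ⟨le_of_lt hPP, sq_nonneg _⟩)
    have hmul : (mink Δ Δ * mink P P ^ 2) * (mink f P) ^ 2 ≤ mink W W * (mink f P) ^ 2 := by
      linarith only [hDD, ht1, ht2]
    exact le_of_mul_le_mul_right hmul hA2
end
end

section
/- (Classical Newton–Wigner theorem, spinning case on the Lie–Poisson phase space.) Let X : Γ → ℝ³ be a C¹ function on Γ = ℝ³ × ℝ³ × ℝ³ whose components satisfy (i) {X^a, X^b} = 0 for all a,b; (ii) {X^a, P_b} = δ_ab for all a,b; (iii) {J_ab, X^c} = δ_ac X^b − δ_bc X^a for all a,b,c; (iv) X(x,−p,−s) = X(x,p,s) for all (x,p,s) (time-reversal invariance). Then X(x,p,s) = x for all (x,p,s) ∈ Γ. Conversely, the projection (x,p,s) ↦ x satisfies (i)–(iv). -/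
noncomputable section

open Finset

abbrev R3 := Fin 3 → ℝ

/-- The spin phase space Γ = ℝ³ × ℝ³ × ℝ³ with points (x, p, s). -/
abbrev Phase := R3 × R3 × R3

/-- Euclidean dot product on ℝ³. -/
def dot3 (v w : R3) : ℝ := ∑ a, v a * w a

/-- Euclidean norm on ℝ³. -/
def norm3 (v : R3) : ℝ := Real.sqrt (dot3 v v)

/-- Cross product on ℝ³. -/
def cross3 (v w : R3) : R3 :=
  ![v 1 * w 2 - v 2 * w 1, v 2 * w 0 - v 0 * w 2, v 0 * w 1 - v 1 * w 0]

/-- Kronecker delta. -/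
def kdelta (a b : Fin 3) : ℝ := if a = b then 1 else 0

/-- Totally antisymmetric symbol on three indices with ε₀₁₂ = +1. -/
def eps3 (a b c : Fin 3) : ℝ :=
  isgn (((b : ℕ) : ℤ) - ((a : ℕ) : ℤ)) * isgn (((c : ℕ) : ℤ) - ((a : ℕ) : ℤ)) *
  isgn (((c : ℕ) : ℤ) - ((b : ℕ) : ℤ))

/-- Gradient of f with respect to x. -/
def dX (f : Phase → ℝ) (γ : Phase) : R3 := fun a => fderiv ℝ f γ (Pi.single a 1, 0, 0)

/-- Gradient of f with respect to p. -/
def dP (f : Phase → ℝ) (γ : Phase) : R3 := fun a => fderiv ℝ f γ (0, Pi.single a 1, 0)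

/-- Gradient of f with respect to s. -/
def dS (f : Phase → ℝ) (γ : Phase) : R3 := fun a => fderiv ℝ f γ (0, 0, Pi.single a 1)

/-- Poisson bracket {f,g} = ∇ₓf·∇ₚg − ∇ₚf·∇ₓg + s·(∇ₛf × ∇ₛg) on Γ. -/
def pb (f g : Phase → ℝ) (γ : Phase) : ℝ :=
  dot3 (dX f γ) (dP g γ) - dot3 (dP f γ) (dX g γ)
    + dot3 γ.2.2 (cross3 (dS f γ) (dS g γ))

/-- Generator of spatial translations: P_a(x,p,s) = p_a. -/
def Pgen (a : Fin 3) : Phase → ℝ := fun γ => γ.2.1 a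

/-- Generator of rotations: J_ab(x,p,s) = x_a p_b − x_b p_a + ε_{abc} s_c. -/
def Jgen (a b : Fin 3) : Phase → ℝ :=
  fun γ => γ.1 a * γ.2.1 b - γ.1 b * γ.2.1 a + ∑ c, eps3 a b c * γ.2.2 c

/-!
Condition (ii) says `∂X^a/∂x_b = δ_ab`, so `X(x, p, s) = x + Y(p, s)` with `Y(p, s) = X(0, p, s)`.
By (iii), `{J_ab, ·}` is minus the derivative along the infinitesimal rotation in the
`(a, b)`-plane; integrating this linear ODE gives `X(R x, R p, R s) = R X(x, p, s)` for rotations `R`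
in coordinate planes. Three of them bring `p` onto the `e₀`-axis and `s` into the `(e₀, e₁)`-plane.
There the half-turn about `e₂` maps `(p, s)` to `(-p, -s)`, so by (iv) `Y` points along `e₂`.
If `s ∥ e₀`, the half-turn about `e₀` fixes `(p, s)`, so `Y = 0`. Otherwise the `e₂`-component
`F(ρ)` of `Y(ρ e₀, s)` satisfies `ρ F'(ρ) = -F(ρ)` by (i) and (iii), so `(ρ F)' = 0` and `F = 0`.
-/

def IsPoissonCommutative (X : Phase → R3) : Prop :=
  ∀ a b : Fin 3, ∀ γ, pb (fun γ => X γ a) (fun γ => X γ b) γ = 0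

def IsConjugateToMomentum (X : Phase → R3) : Prop :=
  ∀ a b : Fin 3, ∀ γ, pb (fun γ => X γ a) (Pgen b) γ = kdelta a b

def IsRotationCovariant (X : Phase → R3) : Prop :=
  ∀ a b c : Fin 3, ∀ γ, pb (Jgen a b) (fun γ => X γ c) γ = kdelta a c * X γ b - kdelta b c * X γ a

def IsTimeReversalEven (X : Phase → R3) : Prop :=
  ∀ x p s : R3, X (x, -p, -s) = X (x, p, s)

def rotGen (a b : Fin 3) : R3 →L[ℝ] R3 :=
  (ContinuousLinearMap.proj a).smulRight (Pi.single b 1) -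
    (ContinuousLinearMap.proj b).smulRight (Pi.single a 1)

/-- Rodrigues' formula for the rotation by `θ` in the `(a, b)`-plane (for `a ≠ b`). -/
def rot (a b : Fin 3) (θ : ℝ) : R3 →L[ℝ] R3 :=
  1 + Real.sin θ • rotGen a b + (1 - Real.cos θ) • rotGen a b ^ 2

section Rotation

variable {a b : Fin 3}

lemma ext_plane {v w : R3} (ha : v a = w a) (hb : v b = w b)
    (hd : ∀ d, d ≠ a → d ≠ b → v d = w d) : v = w := by
  funext d
  by_cases hda : d = a
  · rwa [hda]
  by_cases hdb : d = b
  · rwa [hdb]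
  exact hd d hda hdb

lemma rotGen_apply (v : R3) : rotGen a b v = v a • Pi.single b 1 - v b • Pi.single a 1 := rfl

lemma rotGen_apply_left (hab : a ≠ b) (v : R3) : rotGen a b v a = -v b := by
  simp [rotGen_apply, hab]

lemma rotGen_apply_right (hab : a ≠ b) (v : R3) : rotGen a b v b = v a := by
  simp [rotGen_apply, hab.symm]

lemma rotGen_apply_of_ne {d : Fin 3} (hda : d ≠ a) (hdb : d ≠ b) (v : R3) :
    rotGen a b v d = 0 := by
  simp [rotGen_apply, hda, hdb]

lemma rotGen_pow_three (hab : a ≠ b) : rotGen a b ^ 3 = -rotGen a b := by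
  ext v : 1
  refine ext_plane (a := a) (b := b) ?_ ?_ fun d hda hdb => ?_ <;>
    simp [pow_succ, rotGen_apply_left hab, rotGen_apply_right hab, rotGen_apply_of_ne, *]

lemma rot_apply (θ : ℝ) (v : R3) :
    rot a b θ v = v + Real.sin θ • rotGen a b v + (1 - Real.cos θ) • rotGen a b (rotGen a b v) :=
  rfl

lemma rot_zero : rot a b 0 = 1 := by simp [rot]

lemma rotGen_mul_rot (hab : a ≠ b) (θ : ℝ) :
    rotGen a b * rot a b θ = Real.cos θ • rotGen a b + Real.sin θ • rotGen a b ^ 2 := by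
  simp only [rot, mul_add, mul_one, mul_smul_comm, ← sq, ← pow_succ', rotGen_pow_three hab]
  module

lemma hasDerivAt_rot_apply (hab : a ≠ b) (v : R3) (θ : ℝ) :
    HasDerivAt (fun θ => rot a b θ v) (rotGen a b (rot a b θ v)) θ := by
  have h := (((Real.hasDerivAt_sin θ).smul_const (rotGen a b v)).const_add v).add
    (((Real.hasDerivAt_cos θ).const_sub 1).smul_const ((rotGen a b ^ 2) v))
  refine h.congr_deriv ?_
  change _ = (rotGen a b * rot a b θ) v
  simp [rotGen_mul_rot hab]

lemma eq_rot_of_hasDerivAt (hab : a ≠ b) {u : ℝ → R3}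
    (hu : ∀ θ, HasDerivAt u (rotGen a b (u θ)) θ) (θ : ℝ) : u θ = rot a b θ (u 0) := by
  have := ODE_solution_unique_univ (v := fun _ => rotGen a b) (s := fun _ => Set.univ)
    (fun _ => (rotGen a b).lipschitz.lipschitzOnWith) (fun θ => ⟨hu θ, trivial⟩)
    (fun θ => ⟨hasDerivAt_rot_apply hab (u 0) θ, trivial⟩) (t₀ := 0) (by simp [rot_zero])
  exact congrFun this θ

lemma rot_apply_left (hab : a ≠ b) (θ : ℝ) (v : R3) :
    rot a b θ v a = Real.cos θ * v a - Real.sin θ * v b := by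
  simp only [rot_apply, Pi.add_apply, Pi.smul_apply, smul_eq_mul, rotGen_apply_left hab,
    rotGen_apply_right hab]
  ring

lemma rot_apply_right (hab : a ≠ b) (θ : ℝ) (v : R3) :
    rot a b θ v b = Real.sin θ * v a + Real.cos θ * v b := by
  simp only [rot_apply, Pi.add_apply, Pi.smul_apply, smul_eq_mul, rotGen_apply_left hab,
    rotGen_apply_right hab]
  ring

lemma rot_apply_of_ne {d : Fin 3} (hda : d ≠ a) (hdb : d ≠ b) (θ : ℝ) (v : R3) :
    rot a b θ v d = v d := by
  simp [rot_apply, rotGen_apply_of_ne hda hdb]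

lemma rot_injective (hab : a ≠ b) (θ : ℝ) : Function.Injective (rot a b θ) := by
  refine (injective_iff_map_eq_zero (rot a b θ)).mpr fun v hv => ?_
  have ha : Real.cos θ * v a - Real.sin θ * v b = 0 := by
    rw [← rot_apply_left hab, hv, Pi.zero_apply]
  have hb : Real.sin θ * v a + Real.cos θ * v b = 0 := by
    rw [← rot_apply_right hab, hv, Pi.zero_apply]
  refine ext_plane (a := a) (b := b) ?_ ?_ fun d hda hdb => ?_ <;> rw [Pi.zero_apply]
  · linear_combination Real.cos θ * ha + Real.sin θ * hb - v a * Real.sin_sq_add_cos_sq θ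
  · linear_combination Real.cos θ * hb - Real.sin θ * ha - v b * Real.sin_sq_add_cos_sq θ
  · rw [← rot_apply_of_ne hda hdb θ v, hv, Pi.zero_apply]

lemma exists_rot_apply_eq_zero (hab : a ≠ b) (v : R3) : ∃ θ, rot a b θ v b = 0 := by
  simp only [rot_apply_right hab]
  by_cases hv : v a = 0
  · exact ⟨Real.pi / 2, by simp [hv]⟩
  · refine ⟨Real.arctan (-(v b / v a)), ?_⟩
    rw [Real.sin_arctan, Real.cos_arctan]
    field_simp
    ring

lemma rot_eq_self (hab : a ≠ b) {v : R3} (ha : v a = 0) (hb : v b = 0) (θ : ℝ) :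
    rot a b θ v = v :=
  ext_plane (a := a) (b := b) (by simp [rot_apply_left hab, ha, hb])
    (by simp [rot_apply_right hab, ha, hb]) fun _ hda hdb => rot_apply_of_ne hda hdb θ v

lemma rot_pi_eq_neg (hab : a ≠ b) {v : R3} (hv : ∀ d, d ≠ a → d ≠ b → v d = 0) :
    rot a b Real.pi v = -v :=
  ext_plane (a := a) (b := b) (by simp [rot_apply_left hab]) (by simp [rot_apply_right hab])
    fun d hda hdb => by simp [rot_apply_of_ne hda hdb, hv d hda hdb]

lemma apply_eq_zero_of_eq_rot_pi (hab : a ≠ b) {v : R3} (hv : v = rot a b Real.pi v) :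
    v a = 0 ∧ v b = 0 := by
  have ha := congrFun hv a
  have hb := congrFun hv b
  rw [rot_apply_left hab, Real.cos_pi, Real.sin_pi] at ha
  rw [rot_apply_right hab, Real.cos_pi, Real.sin_pi] at hb
  constructor <;> linarith

end Rotation

lemma eq_zero_of_mul_deriv_eq_neg {F F' : ℝ → ℝ} (hF : ∀ ρ, HasDerivAt F (F' ρ) ρ)
    (h : ∀ ρ, ρ * F' ρ = -F ρ) (ρ : ℝ) : F ρ = 0 := by
  have hmul (ρ : ℝ) : HasDerivAt (fun ρ => ρ * F ρ) 0 ρ :=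
    ((hasDerivAt_id ρ).mul (hF ρ)).congr_deriv (by simp [h ρ])
  have hconst := is_const_of_deriv_eq_zero (fun t => (hmul t).differentiableAt)
    (fun t => (hmul t).deriv) ρ 0
  rcases eq_or_ne ρ 0 with rfl | hρ
  · simpa using h 0
  · simpa [hρ] using hconst

section PoissonBracket

@[simp] lemma dot3_zero_left (v : R3) : dot3 0 v = 0 := by
  simp [dot3]

@[simp] lemma dot3_single_left (v : R3) (c : Fin 3) : dot3 (Pi.single c 1) v = v c := by
  simp [dot3, Pi.single_apply]

@[simp] lemma dot3_single_right (v : R3) (c : Fin 3) : dot3 v (Pi.single c 1) = v c := by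
  simp [dot3, Pi.single_apply]

lemma dot3_cross3 (u v w : R3) : dot3 u (cross3 v w) = dot3 (cross3 u v) w := by
  simp only [dot3, cross3, Fin.sum_univ_three, Matrix.cons_val_zero, Matrix.cons_val_one,
    Matrix.cons_val]
  ring

lemma cross3_eps3 (a b : Fin 3) (v : R3) : cross3 v (fun c => eps3 a b c) = -rotGen a b v := by
  ext d
  fin_cases a <;> fin_cases b <;> fin_cases d <;> simp [cross3, eps3, isgn, rotGen_apply]

lemma fderiv_apply_eq_dot (f : Phase → ℝ) (γ : Phase) (u v w : R3) :
    fderiv ℝ f γ (u, v, w) = dot3 u (dX f γ) + dot3 v (dP f γ) + dot3 w (dS f γ) := by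
  have hdecomp : ((u, v, w) : Phase) = ∑ a, (u a • ((Pi.single a 1 : R3), (0 : R3), (0 : R3))
      + v a • ((0 : R3), (Pi.single a 1 : R3), (0 : R3))
      + w a • ((0 : R3), (0 : R3), (Pi.single a 1 : R3))) := by
    ext d <;> fin_cases d <;> simp [Fin.sum_univ_three]
  rw [hdecomp, map_sum]
  simp only [map_add, map_smul, smul_eq_mul, Finset.sum_add_distrib, dot3, dX, dP, dS]

lemma hasFDerivAt_fst_apply (c : Fin 3) (γ : Phase) :
    HasFDerivAt (fun γ : Phase => γ.1 c)
      ((ContinuousLinearMap.proj c : R3 →L[ℝ] ℝ) ∘L ContinuousLinearMap.fst ℝ R3 (R3 × R3)) γ :=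
  ((ContinuousLinearMap.proj c : R3 →L[ℝ] ℝ) ∘L ContinuousLinearMap.fst ℝ R3 (R3 × R3)).hasFDerivAt

lemma hasFDerivAt_Pgen (c : Fin 3) (γ : Phase) :
    HasFDerivAt (Pgen c) ((ContinuousLinearMap.proj c : R3 →L[ℝ] ℝ) ∘L
      ContinuousLinearMap.fst ℝ R3 R3 ∘L ContinuousLinearMap.snd ℝ R3 (R3 × R3)) γ :=
  ((ContinuousLinearMap.proj c : R3 →L[ℝ] ℝ) ∘L
    ContinuousLinearMap.fst ℝ R3 R3 ∘L ContinuousLinearMap.snd ℝ R3 (R3 × R3)).hasFDerivAt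

lemma hasFDerivAt_snd_snd_apply (c : Fin 3) (γ : Phase) :
    HasFDerivAt (fun γ : Phase => γ.2.2 c) ((ContinuousLinearMap.proj c : R3 →L[ℝ] ℝ) ∘L
      ContinuousLinearMap.snd ℝ R3 R3 ∘L ContinuousLinearMap.snd ℝ R3 (R3 × R3)) γ :=
  ((ContinuousLinearMap.proj c : R3 →L[ℝ] ℝ) ∘L
    ContinuousLinearMap.snd ℝ R3 R3 ∘L ContinuousLinearMap.snd ℝ R3 (R3 × R3)).hasFDerivAt

lemma fderiv_fst_apply (c : Fin 3) (γ w : Phase) :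
    fderiv ℝ (fun γ : Phase => γ.1 c) γ w = w.1 c := by
  rw [(hasFDerivAt_fst_apply c γ).fderiv]
  rfl

lemma fderiv_Pgen_apply (c : Fin 3) (γ w : Phase) : fderiv ℝ (Pgen c) γ w = w.2.1 c := by
  rw [(hasFDerivAt_Pgen c γ).fderiv]
  rfl

lemma fderiv_Jgen_apply (a b : Fin 3) (γ w : Phase) :
    fderiv ℝ (Jgen a b) γ w = γ.1 a * w.2.1 b + γ.2.1 b * w.1 a
      - (γ.1 b * w.2.1 a + γ.2.1 a * w.1 b) + ∑ c, eps3 a b c * w.2.2 c := by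
  have hJ : HasFDerivAt (Jgen a b) _ γ :=
    (((hasFDerivAt_fst_apply a γ).mul (hasFDerivAt_Pgen b γ)).sub
      ((hasFDerivAt_fst_apply b γ).mul (hasFDerivAt_Pgen a γ))).add
    (HasFDerivAt.fun_sum fun c _ => (hasFDerivAt_snd_snd_apply c γ).const_mul (eps3 a b c))
  rw [hJ.fderiv]
  simp [Pgen]

lemma pb_Pgen (f : Phase → ℝ) (b : Fin 3) (γ : Phase) : pb f (Pgen b) γ = dX f γ b := by
  simp [pb, dX, dP, dS, fderiv_Pgen_apply, dot3, cross3, Pi.single_apply, Fin.sum_univ_three]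

lemma pb_Jgen (a b : Fin 3) (f : Phase → ℝ) (γ : Phase) :
    pb (Jgen a b) f γ = -fderiv ℝ f γ (rotGen a b γ.1, rotGen a b γ.2.1, rotGen a b γ.2.2) := by
  have hX : dX (Jgen a b) γ = -rotGen a b γ.2.1 := by
    ext d
    simp [dX, fderiv_Jgen_apply, rotGen_apply, Pi.single_apply, eq_comm]
  have hP : dP (Jgen a b) γ = rotGen a b γ.1 := by
    ext d
    simp [dP, fderiv_Jgen_apply, rotGen_apply, Pi.single_apply, eq_comm]
  have hS : dS (Jgen a b) γ = fun c => eps3 a b c := by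
    ext d
    simp [dS, fderiv_Jgen_apply, Pi.single_apply]
  rw [pb, hX, hP, hS, dot3_cross3, cross3_eps3, fderiv_apply_eq_dot]
  simp only [dot3, Pi.neg_apply, neg_mul, Finset.sum_neg_distrib]
  ring

lemma pb_fst_fst (a b : Fin 3) (γ : Phase) :
    pb (fun γ : Phase => γ.1 a) (fun γ => γ.1 b) γ = 0 := by
  simp [pb, dX, dP, dS, fderiv_fst_apply, dot3, cross3, Fin.sum_univ_three]

lemma pb_fst_Pgen (a b : Fin 3) (γ : Phase) :
    pb (fun γ : Phase => γ.1 a) (Pgen b) γ = kdelta a b := by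
  simp [pb_Pgen, dX, fderiv_fst_apply, kdelta, Pi.single_apply]

lemma pb_Jgen_fst (a b c : Fin 3) (γ : Phase) :
    pb (Jgen a b) (fun γ : Phase => γ.1 c) γ = kdelta a c * γ.1 b - kdelta b c * γ.1 a := by
  simp [pb_Jgen, fderiv_fst_apply, rotGen_apply, kdelta, Pi.single_apply, eq_comm]

end PoissonBracket

section NewtonWigner

variable {X : Phase → R3}

lemma differentiableAt_component (hX : ContDiff ℝ 1 X) (c : Fin 3) (γ : Phase) :
    DifferentiableAt ℝ (fun γ => X γ c) γ :=
  ((contDiff_pi.mp hX c).differentiable one_ne_zero).differentiableAt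

lemma dX_eq_single (h2 : IsConjugateToMomentum X) (c : Fin 3) (γ : Phase) :
    dX (fun γ => X γ c) γ = Pi.single c 1 := by
  ext b
  rw [← pb_Pgen, h2]
  simp [kdelta, Pi.single_apply, eq_comm]

lemma X_eq_add (hX : ContDiff ℝ 1 X) (h2 : IsConjugateToMomentum X) (x p s : R3) :
    X (x, p, s) = x + X (0, p, s) := by
  funext c
  have hzero (y : R3) : HasFDerivAt (fun y : R3 => X (y, p, s) c - y c) (0 : R3 →L[ℝ] ℝ) y := by
    have hcurve : HasFDerivAt (fun y : R3 => ((y, p, s) : Phase))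
        ((ContinuousLinearMap.id ℝ R3).prod 0) y :=
      (ContinuousLinearMap.id ℝ R3).hasFDerivAt.prodMk (hasFDerivAt_const _ _)
    refine (((differentiableAt_component hX c _).hasFDerivAt.comp y hcurve).sub
      (hasFDerivAt_apply c y)).congr_fderiv ?_
    ext v
    simp [← Prod.mk_zero_zero, fderiv_apply_eq_dot, dX_eq_single h2]
  have := is_const_of_fderiv_eq_zero (fun y => (hzero y).differentiableAt)
    (fun y => (hzero y).fderiv) x 0
  simp only [Pi.zero_apply, sub_zero] at this
  rw [Pi.add_apply]
  linarith

lemma fderiv_apply_rotGen (h3 : IsRotationCovariant X) (a b c : Fin 3) (γ : Phase) :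
    fderiv ℝ (fun γ => X γ c) γ (rotGen a b γ.1, rotGen a b γ.2.1, rotGen a b γ.2.2)
      = rotGen a b (X γ) c := by
  rw [← neg_neg (fderiv ℝ _ γ _), ← pb_Jgen, h3]
  simp [rotGen_apply, kdelta, Pi.single_apply, eq_comm]

lemma X_rot (hX : ContDiff ℝ 1 X) (h3 : IsRotationCovariant X) {a b : Fin 3} (hab : a ≠ b)
    (θ : ℝ) (x p s : R3) :
    X (rot a b θ x, rot a b θ p, rot a b θ s) = rot a b θ (X (x, p, s)) := by
  have hu (θ : ℝ) : HasDerivAt (fun θ => X (rot a b θ x, rot a b θ p, rot a b θ s))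
      (rotGen a b (X (rot a b θ x, rot a b θ p, rot a b θ s))) θ := by
    rw [hasDerivAt_pi]
    intro c
    have hcurve := (hasDerivAt_rot_apply hab x θ).prodMk
      ((hasDerivAt_rot_apply hab p θ).prodMk (hasDerivAt_rot_apply hab s θ))
    have := (differentiableAt_component hX c _).hasFDerivAt.comp_hasDerivAt θ hcurve
    rwa [fderiv_apply_rotGen h3] at this
  simpa [rot_zero] using eq_rot_of_hasDerivAt hab hu θ

lemma X_zero_eq_zero_of_rot (hX : ContDiff ℝ 1 X) (h3 : IsRotationCovariant X) {a b : Fin 3}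
    (hab : a ≠ b) (θ : ℝ) {p s : R3} (h : X (0, rot a b θ p, rot a b θ s) = 0) :
    X (0, p, s) = 0 := by
  apply rot_injective hab θ
  rw [← X_rot hX h3 hab, map_zero, h]

lemma X_zero_apply_eq_zero_of_planar (hX : ContDiff ℝ 1 X) (h3 : IsRotationCovariant X)
    (h4 : IsTimeReversalEven X) {p s : R3} (hp : p 2 = 0) (hs : s 2 = 0) :
    X (0, p, s) 0 = 0 ∧ X (0, p, s) 1 = 0 := by
  have hplanar {v : R3} (hv : v 2 = 0) (d : Fin 3) (h0 : d ≠ 0) (h1 : d ≠ 1) : v d = 0 := by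
    fin_cases d <;> simp_all
  apply apply_eq_zero_of_eq_rot_pi (by decide)
  rw [← X_rot hX h3 (by decide), map_zero, rot_pi_eq_neg (by decide) (hplanar hp),
    rot_pi_eq_neg (by decide) (hplanar hs), h4]

lemma X_zero_apply_two_eq_zero_of_axial (hX : ContDiff ℝ 1 X) (h3 : IsRotationCovariant X)
    {p s : R3} (hp1 : p 1 = 0) (hp2 : p 2 = 0) (hs1 : s 1 = 0) (hs2 : s 2 = 0) :
    X (0, p, s) 2 = 0 := by
  refine (apply_eq_zero_of_eq_rot_pi (a := 1) (by decide) ?_).2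
  rw [← X_rot hX h3 (by decide), map_zero, rot_eq_self (by decide) hp1 hp2,
    rot_eq_self (by decide) hs1 hs2]

lemma mul_dP_eq_neg (hX : ContDiff ℝ 1 X) (h1 : IsPoissonCommutative X)
    (h2 : IsConjugateToMomentum X) (h3 : IsRotationCovariant X) (h4 : IsTimeReversalEven X)
    {s : R3} (hs1 : s 1 ≠ 0) (hs2 : s 2 = 0) (ρ : ℝ) :
    ρ * dP (fun γ => X γ 2) (0, ρ • Pi.single 0 1, s) 0 = -X (0, ρ • Pi.single 0 1, s) 2 := by
  have hX1 : X (0, ρ • Pi.single 0 1, s) 1 = 0 :=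
    (X_zero_apply_eq_zero_of_planar hX h3 h4 (by simp) hs2).2
  generalize hγ : ((0, ρ • Pi.single 0 1, s) : Phase) = γ at hX1 ⊢
  have hx : γ.1 = 0 := by rw [← hγ]
  have hp : γ.2.1 = ρ • Pi.single 0 1 := by rw [← hγ]
  have hs : γ.2.2 = s := by rw [← hγ]
  have hrot (a b c : Fin 3) := fderiv_apply_rotGen h3 a b c γ
  simp only [fderiv_apply_eq_dot, hx, hp, hs] at hrot
  -- the rotation about `e₀` moves only `s`, and only along `e₂`
  have hS (c : Fin 3) : s 1 * dS (fun γ => X γ c) γ 2 = rotGen 1 2 (X γ) c := by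
    simpa [rotGen_apply, dot3, Fin.sum_univ_three, hs2] using hrot 1 2 c
  have hS0 : dS (fun γ => X γ 0) γ 2 = 0 := by
    simpa [hs1, rotGen_apply] using hS 0
  have hS2 : dS (fun γ => X γ 2) γ 2 = 0 := by
    simpa [hs1, rotGen_apply, hX1] using hS 2
  have hP0 : ρ * dP (fun γ => X γ 0) γ 2 = -X γ 2 := by
    simpa [rotGen_apply, dot3, Fin.sum_univ_three, hs2, hS0] using hrot 0 2 0
  have hsymm : dP (fun γ => X γ 2) γ 0 = dP (fun γ => X γ 0) γ 2 := by
    have h := h1 2 0 γ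
    have hspin : dot3 γ.2.2 (cross3 (dS (fun γ => X γ 2) γ) (dS (fun γ => X γ 0) γ)) = 0 := by
      simp [hs, dot3, cross3, Fin.sum_univ_three, hs2, hS0, hS2]
    rw [pb, hspin, dX_eq_single h2, dX_eq_single h2, dot3_single_left, dot3_single_right] at h
    linarith
  rw [hsymm, hP0]

lemma X_zero_apply_two_eq_zero_of_transverse (hX : ContDiff ℝ 1 X)
    (h1 : IsPoissonCommutative X) (h2 : IsConjugateToMomentum X) (h3 : IsRotationCovariant X)
    (h4 : IsTimeReversalEven X) {s : R3} (hs1 : s 1 ≠ 0) (hs2 : s 2 = 0) (ρ : ℝ) :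
    X (0, ρ • Pi.single 0 1, s) 2 = 0 := by
  have hderiv (ρ : ℝ) : HasDerivAt (fun ρ : ℝ => X (0, ρ • Pi.single 0 1, s) 2)
      (dP (fun γ => X γ 2) (0, ρ • Pi.single 0 1, s) 0) ρ := by
    have hcurve := (hasDerivAt_const ρ (0 : R3)).prodMk
      (((hasDerivAt_id' ρ).smul_const (Pi.single 0 1 : R3)).prodMk (hasDerivAt_const ρ s))
    refine ((differentiableAt_component hX 2 _).hasFDerivAt.comp_hasDerivAt ρ
      hcurve).congr_deriv ?_
    simp [fderiv_apply_eq_dot]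
  exact eq_zero_of_mul_deriv_eq_neg hderiv (mul_dP_eq_neg hX h1 h2 h3 h4 hs1 hs2) ρ

lemma X_zero_eq_zero_of_normal (hX : ContDiff ℝ 1 X) (h1 : IsPoissonCommutative X)
    (h2 : IsConjugateToMomentum X) (h3 : IsRotationCovariant X) (h4 : IsTimeReversalEven X)
    {p s : R3} (hp1 : p 1 = 0) (hp2 : p 2 = 0) (hs2 : s 2 = 0) : X (0, p, s) = 0 := by
  obtain ⟨hY0, hY1⟩ := X_zero_apply_eq_zero_of_planar hX h3 h4 hp2 hs2
  have hY2 : X (0, p, s) 2 = 0 := by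
    rcases eq_or_ne (s 1) 0 with hs1 | hs1
    · exact X_zero_apply_two_eq_zero_of_axial hX h3 hp1 hp2 hs1 hs2
    · have hp : p = p 0 • Pi.single 0 1 := by
        funext d
        fin_cases d <;> simp [hp1, hp2]
      rw [hp]
      exact X_zero_apply_two_eq_zero_of_transverse hX h1 h2 h3 h4 hs1 hs2 (p 0)
  funext d
  fin_cases d <;> assumption

lemma X_zero_eq_zero (hX : ContDiff ℝ 1 X) (h1 : IsPoissonCommutative X)
    (h2 : IsConjugateToMomentum X) (h3 : IsRotationCovariant X) (h4 : IsTimeReversalEven X)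
    (p s : R3) : X (0, p, s) = 0 := by
  have h12 : (1 : Fin 3) ≠ 2 := by decide
  have h01 : (0 : Fin 3) ≠ 1 := by decide
  -- rotate `p` onto the `e₀`-axis, then `s` into the `(e₀, e₁)`-plane about that axis
  obtain ⟨θ₁, hp₁⟩ := exists_rot_apply_eq_zero h12 p
  obtain ⟨θ₂, hp₂⟩ := exists_rot_apply_eq_zero h01 (rot 1 2 θ₁ p)
  have hp₂' : rot 0 1 θ₂ (rot 1 2 θ₁ p) 2 = 0 := by
    rwa [rot_apply_of_ne (by decide) (by decide)]
  obtain ⟨θ₃, hs₃⟩ := exists_rot_apply_eq_zero h12 (rot 0 1 θ₂ (rot 1 2 θ₁ s))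
  refine X_zero_eq_zero_of_rot hX h3 h12 θ₁ (X_zero_eq_zero_of_rot hX h3 h01 θ₂
    (X_zero_eq_zero_of_rot hX h3 h12 θ₃ ?_))
  rw [rot_eq_self h12 hp₂ hp₂']
  exact X_zero_eq_zero_of_normal hX h1 h2 h3 h4 hp₂ hp₂' hs₃

end NewtonWigner

theorem statement9 (X : Phase → R3) (hX : ContDiff ℝ 1 X)
    (h1 : ∀ a b : Fin 3, ∀ γ, pb (fun γ => X γ a) (fun γ => X γ b) γ = 0)
    (h2 : ∀ a b : Fin 3, ∀ γ, pb (fun γ => X γ a) (Pgen b) γ = kdelta a b)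
    (h3 : ∀ a b c : Fin 3, ∀ γ, pb (Jgen a b) (fun γ => X γ c) γ
      = kdelta a c * X γ b - kdelta b c * X γ a)
    (h4 : ∀ x p s : R3, X (x, -p, -s) = X (x, p, s)) :
    (∀ x p s : R3, X (x, p, s) = x) ∧
    (ContDiff ℝ 1 (fun γ : Phase => γ.1) ∧
     (∀ a b : Fin 3, ∀ γ, pb (fun γ : Phase => γ.1 a) (fun γ => γ.1 b) γ = 0) ∧
     (∀ a b : Fin 3, ∀ γ, pb (fun γ : Phase => γ.1 a) (Pgen b) γ = kdelta a b) ∧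
     (∀ a b c : Fin 3, ∀ γ, pb (Jgen a b) (fun γ : Phase => γ.1 c) γ
        = kdelta a c * γ.1 b - kdelta b c * γ.1 a) ∧
     (∀ x p s : R3, ((x, -p, -s) : Phase).1 = ((x, p, s) : Phase).1)) := by
  refine ⟨fun x p s => ?_, contDiff_fst, pb_fst_fst, pb_fst_Pgen, pb_Jgen_fst, fun _ _ _ => rfl⟩
  rw [X_eq_add hX h2, X_zero_eq_zero hX h1 h2 h3 h4, add_zero]
end
end
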